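/- arXiv:1410.2940 — 2 statements merged into one kernel-verified Lean document; each statement's English description precedes it below -/
import Mathlib

section
/- Let Γ be a finite simple graph of order n with maximum degree δ_1. The minimum degree of the nonzero terms of the alliance polynomial A(Γ;x) is n − δ_1, and the coefficient of x^{n−δ_1} equals the number of vertices of Γ of degree δ_1. -/
open Finset Polynomial
open scoped Classical

noncomputable section

variable {V : Type*} [Fintype V]

/-- Number of neighbors of `v` inside `S` (as an integer). -/
def degIn (G : SimpleGraph V) (S : Finset V) (v : V) : ℤ :=
  ((S.filter (fun u => G.Adj v u)).card : ℤ)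

/-- Number of neighbors of `v` outside `S` (as an integer). -/
def degOut (G : SimpleGraph V) (S : Finset V) (v : V) : ℤ :=
  ((Sᶜ.filter (fun u => G.Adj v u)).card : ℤ)

/-- The exact index of alliance of `S`. -/
def exactIndex (G : SimpleGraph V) (S : Finset V) : ℤ :=
  if h : S.Nonempty then S.inf' h (fun v => degIn G S v - degOut G S v) else 0

/-- Nonempty vertex subsets inducing a connected subgraph. -/
def goodSets (G : SimpleGraph V) : Finset (Finset V) :=
  Finset.univ.filter (fun S => S.Nonempty ∧ (G.induce (S : Set V)).Connected)

/-- The alliance polynomial. -/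
def alliancePoly (G : SimpleGraph V) : Polynomial ℤ :=
  ∑ S ∈ goodSets G, X ^ (((Fintype.card V : ℤ) + exactIndex G S).toNat)

/-- `A_k(Γ)`: number of connected exact defensive `k`-alliances. -/
def allianceCount (G : SimpleGraph V) (k : ℤ) : ℕ :=
  ((goodSets G).filter (fun S => exactIndex G S = k)).card

lemma degOut_le (G : SimpleGraph V) (S : Finset V) (v : V) : degOut G S v ≤ (G.degree v : ℤ) := by
  unfold degOut
  rw [SimpleGraph.degree, SimpleGraph.neighborFinset_eq_filter]
  exact_mod_cast Finset.card_le_card (Finset.filter_subset_filter _ (Finset.subset_univ _))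

lemma exactIndex_ge (G : SimpleGraph V) {S : Finset V} (hS : S.Nonempty) :
    -(G.maxDegree : ℤ) ≤ exactIndex G S := by
  rw [exactIndex, dif_pos hS]
  apply Finset.le_inf'
  intro v hv
  have h1 : (0:ℤ) ≤ degIn G S v := Int.natCast_nonneg _
  have h2 := degOut_le G S v
  have h3 : (G.degree v : ℤ) ≤ G.maxDegree := by exact_mod_cast G.degree_le_maxDegree v
  linarith

lemma degIn_singleton (G : SimpleGraph V) (v : V) : degIn G {v} v = 0 := by
  unfold degIn
  simp [Finset.filter_singleton, G.irrefl]

lemma degOut_singleton (G : SimpleGraph V) (v : V) : degOut G {v} v = (G.degree v : ℤ) := by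
  unfold degOut
  rw [SimpleGraph.degree, SimpleGraph.neighborFinset_eq_filter]
  norm_cast
  congr 1
  ext u
  simp only [Finset.mem_filter, Finset.mem_compl, Finset.mem_singleton, Finset.mem_univ, true_and]
  exact ⟨fun h => h.2, fun h => ⟨fun e => G.irrefl (e ▸ h), h⟩⟩

lemma exactIndex_singleton (G : SimpleGraph V) (v : V) :
    exactIndex G {v} = -(G.degree v : ℤ) := by
  rw [exactIndex, dif_pos (Finset.singleton_nonempty v)]
  simp [degIn_singleton, degOut_singleton]

lemma singleton_mem_goodSets (G : SimpleGraph V) (v : V) : {v} ∈ goodSets G := by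
  rw [goodSets, Finset.mem_filter]
  refine ⟨Finset.mem_univ _, Finset.singleton_nonempty v, ?_⟩
  haveI : Nonempty (↑({v} : Finset V) : Set V) := ⟨⟨v, by simp⟩⟩
  constructor
  intro a b
  have ha : (a : V) = v := by have := a.2; simpa using this
  have hb : (b : V) = v := by have := b.2; simpa using this
  have : a = b := Subtype.ext (ha.trans hb.symm)
  exact this ▸ SimpleGraph.Reachable.refl a

lemma exists_neighbor (G : SimpleGraph V) {S : Finset V}
    (hc : (G.induce (S : Set V)).Connected) {v u : V} (hv : v ∈ S) (hu : u ∈ S) (hne : u ≠ v) :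
    ∃ w ∈ S, G.Adj v w := by
  obtain ⟨p⟩ := hc.preconnected ⟨v, hv⟩ ⟨u, hu⟩
  cases p with
  | nil => exact absurd rfl hne
  | @cons _ b _ h p => exact ⟨b, Finset.mem_coe.mp b.2, h⟩

lemma coeff_alliancePoly (G : SimpleGraph V) (m : ℕ) :
    (alliancePoly G).coeff m =
      ((goodSets G).filter
        (fun S => (((Fintype.card V : ℤ) + exactIndex G S).toNat) = m)).card := by
  rw [alliancePoly, Polynomial.finset_sum_coeff]
  rw [Finset.card_filter]
  push_cast
  refine Finset.sum_congr rfl fun S _ => ?_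
  rw [Polynomial.coeff_X_pow]
  by_cases h : ((Fintype.card V : ℤ) + exactIndex G S).toNat = m
  · simp [h]
  · simp [h, Ne.symm h]

lemma index_eq_iff (G : SimpleGraph V) {S : Finset V} (hS : S ∈ goodSets G) :
    exactIndex G S = -(G.maxDegree : ℤ) ↔ ∃ v, S = {v} ∧ G.degree v = G.maxDegree := by
  rw [goodSets, Finset.mem_filter] at hS
  obtain ⟨-, hne, hconn⟩ := hS
  constructor
  · intro h
    rw [exactIndex, dif_pos hne] at h
    obtain ⟨v, hv, hmin⟩ := Finset.exists_mem_eq_inf' hne (fun v => degIn G S v - degOut G S v)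
    rw [hmin] at h
    have h1 : (0:ℤ) ≤ degIn G S v := Int.natCast_nonneg _
    have h2 := degOut_le G S v
    have h3 : (G.degree v : ℤ) ≤ G.maxDegree := by exact_mod_cast G.degree_le_maxDegree v
    have hdin : degIn G S v = 0 := by linarith
    have hdeg : (G.degree v : ℤ) = G.maxDegree := by linarith
    have hSv : S = {v} := by
      apply Finset.eq_singleton_iff_unique_mem.mpr
      refine ⟨hv, fun u hu => ?_⟩
      by_contra hune
      obtain ⟨w, hw, hadj⟩ := exists_neighbor G hconn hv hu hune
      have : w ∈ S.filter (fun u => G.Adj v u) := Finset.mem_filter.mpr ⟨hw, hadj⟩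
      have : (S.filter (fun u => G.Adj v u)).card ≠ 0 :=
        Finset.card_ne_zero_of_mem this
      unfold degIn at hdin
      omega
    exact ⟨v, hSv, by exact_mod_cast hdeg⟩
  · rintro ⟨v, rfl, hdeg⟩
    rw [exactIndex_singleton, hdeg]

end

/-- the minimum degree of the terms of `A(Γ;x)` is `n - δ₁`, with
coefficient the number of vertices of maximum degree. -/
theorem alliancePoly_trailing {V : Type*} [Fintype V] [Nonempty V] (G : SimpleGraph V) :
    (alliancePoly G).natTrailingDegree = Fintype.card V - G.maxDegree ∧
    (alliancePoly G).coeff (Fintype.card V - G.maxDegree)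
      = ((Finset.univ.filter (fun v => G.degree v = G.maxDegree)).card : ℤ) := by
  have hlt : G.maxDegree < Fintype.card V := G.maxDegree_lt_card_verts
  have hge : ∀ S ∈ goodSets G, ((Fintype.card V : ℤ) - G.maxDegree) ≤
      (Fintype.card V : ℤ) + exactIndex G S := by
    intro S hS
    rw [goodSets, Finset.mem_filter] at hS
    have := exactIndex_ge G hS.2.1
    linarith
  have hcoeff : (alliancePoly G).coeff (Fintype.card V - G.maxDegree)
      = ((Finset.univ.filter (fun v => G.degree v = G.maxDegree)).card : ℤ) := by
    rw [coeff_alliancePoly]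
    rw [Nat.cast_inj]
    have hset : (goodSets G).filter (fun S =>
        (((Fintype.card V : ℤ) + exactIndex G S).toNat) = Fintype.card V - G.maxDegree)
        = (Finset.univ.filter (fun v => G.degree v = G.maxDegree)).image
            (fun v => ({v} : Finset V)) := by
      ext S
      simp only [Finset.mem_filter, Finset.mem_image, Finset.mem_univ, true_and]
      constructor
      · rintro ⟨hS, htn⟩
        have h1 := hge S hS
        have hidx : exactIndex G S = -(G.maxDegree : ℤ) := by omega
        obtain ⟨v, rfl, hdeg⟩ := (index_eq_iff G hS).mp hidx
        exact ⟨v, hdeg, rfl⟩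
      · rintro ⟨v, hdeg, rfl⟩
        refine ⟨singleton_mem_goodSets G v, ?_⟩
        rw [exactIndex_singleton, hdeg]
        omega
    rw [hset, Finset.card_image_of_injective _ Finset.singleton_injective]
  refine ⟨?_, hcoeff⟩
  have hpos : (alliancePoly G).coeff (Fintype.card V - G.maxDegree) ≠ 0 := by
    rw [hcoeff]
    obtain ⟨v, hv⟩ := G.exists_maximal_degree_vertex
    have : v ∈ Finset.univ.filter (fun v => G.degree v = G.maxDegree) := by
      simp [hv.symm]
    have := Finset.card_ne_zero_of_mem this
    exact_mod_cast this
  have hzero : ∀ m < Fintype.card V - G.maxDegree, (alliancePoly G).coeff m = 0 := by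
    intro m hm
    rw [coeff_alliancePoly]
    rw [Finset.filter_eq_empty_iff.mpr ?_]
    · simp
    · intro S hS
      have := hge S hS
      omega
  have hne0 : alliancePoly G ≠ 0 := fun h => hpos (by rw [h, Polynomial.coeff_zero])
  exact le_antisymm (Polynomial.natTrailingDegree_le_of_ne_zero hpos)
    (Polynomial.le_natTrailingDegree hne0 hzero)
end

section
/- A finite connected simple graph Γ with maximum degree δ_1 is regular if and only if A_{δ_1}(Γ) = 1. -/
open Finset Polynomial
open scoped Classical

noncomputable section

variable {V : Type*} [Fintype V]

lemma degIn_add_degOut (G : SimpleGraph V) (S : Finset V) (v : V) :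
    degIn G S v + degOut G S v = (G.degree v : ℤ) := by
  classical
  unfold degIn degOut
  rw [← Nat.cast_add]
  congr 1
  rw [← Finset.card_union_of_disjoint
    ((disjoint_compl_right).mono (Finset.filter_subset _ _) (Finset.filter_subset _ _)),
    ← Finset.filter_union, Finset.union_compl]
  congr 1
  ext x
  simp [SimpleGraph.mem_neighborFinset]

lemma degOut_eq_zero_adj {G : SimpleGraph V} {S : Finset V} {v w : V}
    (h : degOut G S v = 0) (hadj : G.Adj v w) : w ∈ S := by
  classical
  unfold degOut at h
  rw [Nat.cast_eq_zero, Finset.card_eq_zero, Finset.filter_eq_empty_iff] at h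
  by_contra hw
  exact h (Finset.mem_compl.2 hw) hadj

lemma walk_closure {G : SimpleGraph V} {S : Finset V}
    (h0 : ∀ v ∈ S, degOut G S v = 0) {u w : V} (p : G.Walk u w) (hu : u ∈ S) : w ∈ S := by
  induction p with
  | nil => exact hu
  | cons hadj _ ih => exact ih (degOut_eq_zero_adj (h0 _ hu) hadj)

lemma key {G : SimpleGraph V} (hc : G.Connected) {S : Finset V}
    (hS : S ∈ (goodSets G).filter (fun S => exactIndex G S = (G.maxDegree : ℤ))) :
    S = Finset.univ ∧ ∀ v, G.degree v = G.maxDegree := by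
  classical
  simp only [Finset.mem_filter, goodSets, Finset.mem_univ, true_and] at hS
  obtain ⟨⟨hne, _⟩, hidx⟩ := hS
  rw [exactIndex, dif_pos hne] at hidx
  have hge : ∀ v ∈ S, (G.maxDegree : ℤ) ≤ degIn G S v - degOut G S v := by
    intro v hv
    rw [← hidx]
    exact Finset.inf'_le _ hv
  have hout : ∀ v ∈ S, degOut G S v = 0 := by
    intro v hv
    have h1 := hge v hv
    have h2 := degIn_add_degOut G S v
    have h3 : (G.degree v : ℤ) ≤ (G.maxDegree : ℤ) :=
      Int.ofNat_le.2 (G.degree_le_maxDegree v)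
    have h4 : (0 : ℤ) ≤ degOut G S v := Int.ofNat_nonneg _
    omega
  have hdeg : ∀ v ∈ S, G.degree v = G.maxDegree := by
    intro v hv
    have h1 := hge v hv
    have h2 := degIn_add_degOut G S v
    have h3 : (G.degree v : ℤ) ≤ (G.maxDegree : ℤ) :=
      Int.ofNat_le.2 (G.degree_le_maxDegree v)
    have h4 := hout v hv
    omega
  obtain ⟨u, hu⟩ := hne
  have huniv : S = Finset.univ := by
    apply Finset.eq_univ_of_forall
    intro w
    obtain ⟨p⟩ := hc.preconnected u w
    exact walk_closure hout p hu
  exact ⟨huniv, fun v => hdeg v (huniv ▸ Finset.mem_univ v)⟩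

lemma univ_good {G : SimpleGraph V} (hc : G.Connected) :
    (Finset.univ : Finset V) ∈ goodSets G := by
  classical
  have : Nonempty V := hc.nonempty
  have hne : (Finset.univ : Finset V).Nonempty := Finset.univ_nonempty
  refine Finset.mem_filter.2 ⟨Finset.mem_univ _, hne, ?_⟩
  have : ((Finset.univ : Finset V) : Set V) = Set.univ := by simp
  rw [this]
  exact ((G.induceUnivIso).symm.connected_iff (G := G)).mp hc

end

/-- a connected graph is regular iff `A_{δ₁}(Γ) = 1`. -/
theorem connected_regular_iff_allianceCount {V : Type*} [Fintype V] (G : SimpleGraph V)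
    (hc : G.Connected) :
    (∃ d : ℕ, G.IsRegularOfDegree d) ↔ allianceCount G (G.maxDegree : ℤ) = 1 := by
  classical
  have hnonempty : Nonempty V := hc.nonempty
  constructor
  · rintro ⟨d, hd⟩
    have hdmax : d = G.maxDegree := by
      obtain ⟨v⟩ := hnonempty
      have h1 : G.degree v ≤ G.maxDegree := G.degree_le_maxDegree v
      have h2 : G.maxDegree ≤ d := G.maxDegree_le_of_forall_degree_le d (fun w => (hd w).le)
      rw [hd v] at h1
      omega
    have hfilter : ((goodSets G).filter (fun S => exactIndex G S = (G.maxDegree : ℤ)))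
        = {Finset.univ} := by
      apply Finset.eq_singleton_iff_unique_mem.2
      constructor
      · refine Finset.mem_filter.2 ⟨univ_good hc, ?_⟩
        have hne : (Finset.univ : Finset V).Nonempty := Finset.univ_nonempty
        rw [exactIndex, dif_pos hne]
        have hval : ∀ v : V, degIn G Finset.univ v - degOut G Finset.univ v
            = (G.maxDegree : ℤ) := by
          intro v
          have h2 := degIn_add_degOut G Finset.univ v
          have h0 : degOut G Finset.univ v = 0 := by
            unfold degOut; simp
          rw [hd v, hdmax] at h2
          omega
        obtain ⟨v, hv⟩ := hne
        apply le_antisymm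
        · exact (hval v) ▸ Finset.inf'_le _ hv
        · exact Finset.le_inf' _ _ (fun w _ => (hval w).ge)
      · intro S hS
        exact (key hc hS).1
    rw [allianceCount, hfilter, Finset.card_singleton]
  · intro h
    rw [allianceCount, Finset.card_eq_one] at h
    obtain ⟨S, hS⟩ := h
    have hmem : S ∈ (goodSets G).filter (fun S => exactIndex G S = (G.maxDegree : ℤ)) := by
      rw [hS]; exact Finset.mem_singleton_self _
    exact ⟨G.maxDegree, fun v => (key hc hmem).2 v⟩
end
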